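/- Let A be an n×n max-plus matrix with finite spectral radius λ > -∞, g ∈ (ℝ ∪ {-∞})^n, and h ∈ ℝ^n regular with h^- ⊗ g ≤ 0 (i.e., g_i ≤ h_i for all i). Then the minimum of x^- ⊗ A ⊗ x = max_{i,j}(a_{ij} + x_j − x_i) over regular vectors x with g ≤ x ≤ h equals θ = λ ⊕ max_{k=1..n-1} (1/k)·(h^- ⊗ A^k ⊗ g), and all regular minimizers are x = (θ^{-1}⊗A)* ⊗ u where g ≤ u ≤ (h^- ⊗ (θ^{-1}⊗A)*)^-. -/

import Mathlib

open Finset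

abbrev MP := WithBot ℝ

/-- Negation (max-plus multiplicative inverse), fixing -∞. -/
def mneg : MP → MP := WithBot.map Neg.neg

/-- Max-plus matrix multiplication. -/
def mpMul {l m n : ℕ} (A : Fin l → Fin m → MP) (B : Fin m → Fin n → MP) :
    Fin l → Fin n → MP :=
  fun i j => Finset.univ.sup fun k => A i k + B k j

/-- Max-plus matrix-vector product. -/
def mpMulVec {m n : ℕ} (A : Fin m → Fin n → MP) (v : Fin n → MP) : Fin m → MP :=
  fun i => Finset.univ.sup fun j => A i j + v j

/-- The max-plus identity matrix. -/
def mpId (n : ℕ) : Fin n → Fin n → MP := fun i j => if i = j then (0 : MP) else ⊥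

/-- Max-plus matrix power. -/
def mpPow {n : ℕ} (A : Fin n → Fin n → MP) : ℕ → (Fin n → Fin n → MP)
  | 0 => mpId n
  | k + 1 => mpMul (mpPow A k) A

/-- Max-plus trace. -/
def mptr {n : ℕ} (A : Fin n → Fin n → MP) : MP := Finset.univ.sup fun i => A i i

/-- Kleene star: B* = I ⊕ B ⊕ ⋯ ⊕ B^{n-1}. -/
def mpStar {n : ℕ} (B : Fin n → Fin n → MP) : Fin n → Fin n → MP :=
  (Finset.range n).sup fun k => mpPow B k

/-- The max-plus spectral radius λ = max over k = 1..n of tr(Aᵏ)^{1/k}. -/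
noncomputable def specRad {n : ℕ} (A : Fin n → Fin n → MP) : MP :=
  (Finset.Icc 1 n).sup fun k => WithBot.map (fun r => r / (k : ℝ)) (mptr (mpPow A k))

/-- θ = λ ⊕ max over k = 1..n-1 of (h⁻ ⊗ Aᵏ ⊗ g)^{1/k}. -/
noncomputable def theta {n : ℕ} (A : Fin n → Fin n → MP) (g : Fin n → MP)
    (h : Fin n → ℝ) : MP :=
  specRad A ⊔ ((Finset.Icc 1 (n - 1)).sup fun k => WithBot.map (fun r => r / (k : ℝ))
    (Finset.univ.sup fun i => mpMulVec (mpPow A k) g i + ((-h i : ℝ) : MP)))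

/-- The matrix θ⁻¹ ⊗ A. -/
noncomputable def matB {n : ℕ} (A : Fin n → Fin n → MP) (g : Fin n → MP)
    (h : Fin n → ℝ) : Fin n → Fin n → MP :=
  fun i j => mneg (theta A g h) + A i j

/-- The objective x⁻ ⊗ A ⊗ x = max_{i,j} (aᵢⱼ + xⱼ - xᵢ). -/
noncomputable def obj {n : ℕ} (A : Fin n → Fin n → MP) (x : Fin n → MP) : MP :=
  Finset.univ.sup fun i => mneg (x i) + mpMulVec A x i


section MaxPlusHelpers

lemma mp_add_sup (a b c : MP) : a + (b ⊔ c) = (a+b) ⊔ (a+c) := by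
  rcases le_total b c with h|h
  · rw [sup_eq_right.2 h, sup_eq_right.2 (add_le_add_right h a)]
  · rw [sup_eq_left.2 h, sup_eq_left.2 (add_le_add_right h a)]

lemma add_finsetSup {ι : Type*} (s : Finset ι) (f : ι → MP) (c : MP) :
    c + s.sup f = s.sup fun i => c + f i := by
  classical
  induction s using Finset.induction with
  | empty => simp [WithBot.add_bot]
  | insert _ _ _ ih => simp [Finset.sup_insert, mp_add_sup, ih]

lemma finsetSup_add {ι : Type*} (s : Finset ι) (f : ι → MP) (c : MP) :
    s.sup f + c = s.sup fun i => f i + c := by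
  rw [add_comm, add_finsetSup]; simp [add_comm]

lemma mp_cases (x : MP) : x = ⊥ ∨ ∃ r : ℝ, x = (r : MP) := by
  induction x using WithBot.recBotCoe with
  | bot => exact Or.inl rfl
  | coe r => exact Or.inr ⟨r, rfl⟩

lemma mneg_coe (r : ℝ) : mneg ((r:ℝ):MP) = ((-r:ℝ):MP) := by
  simp [mneg]

lemma add_coe_le_coe_iff (y : MP) (c d : ℝ) :
    y + ((c:ℝ):MP) ≤ ((d:ℝ):MP) ↔ y ≤ ((d - c:ℝ):MP) := by
  rcases mp_cases y with hb | ⟨r, hr⟩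
  · rw [hb]; simp [WithBot.bot_add]
  · rw [hr, ← WithBot.coe_add, WithBot.coe_le_coe, WithBot.coe_le_coe]
    constructor <;> intro <;> linarith

lemma coe_add_le_coe_iff (y : MP) (c d : ℝ) :
    ((c:ℝ):MP) + y ≤ ((d:ℝ):MP) ↔ y ≤ ((d - c:ℝ):MP) := by
  rw [add_comm]; exact add_coe_le_coe_iff y c d

lemma mpMul_assoc {a b c d : ℕ} (A : Fin a → Fin b → MP) (B : Fin b → Fin c → MP)
    (C : Fin c → Fin d → MP) : mpMul (mpMul A B) C = mpMul A (mpMul B C) := by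
  funext i j
  simp only [mpMul, finsetSup_add, add_finsetSup]
  rw [Finset.sup_comm]
  simp [add_assoc]

lemma mpMul_id {m n : ℕ} (A : Fin m → Fin n → MP) : mpMul A (mpId n) = A := by
  funext i j
  apply le_antisymm
  · apply Finset.sup_le; intro k _
    by_cases hk : k = j
    · subst hk; simp [mpId]
    · simp [mpId, hk, WithBot.add_bot]
  · calc A i j = A i j + mpId n j j := by simp [mpId]
    _ ≤ _ := Finset.le_sup (f := fun k => A i k + mpId n k j) (Finset.mem_univ j)

lemma id_mpMul {m n : ℕ} (A : Fin m → Fin n → MP) : mpMul (mpId m) A = A := by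
  funext i j
  apply le_antisymm
  · apply Finset.sup_le; intro k _
    by_cases hk : i = k
    · subst hk; simp [mpId]
    · simp [mpId, hk, WithBot.bot_add]
  · calc A i j = mpId m i i + A i j := by simp [mpId]
    _ ≤ _ := Finset.le_sup (f := fun k => mpId m i k + A k j) (Finset.mem_univ i)

lemma mpPow_succ' {n : ℕ} (A : Fin n → Fin n → MP) (k : ℕ) :
    mpPow A (k+1) = mpMul A (mpPow A k) := by
  induction k with
  | zero => show mpMul (mpId n) A = mpMul A (mpId n); rw [mpMul_id, id_mpMul]
  | succ k ih =>
    show mpMul (mpPow A (k+1)) A = mpMul A (mpPow A (k+1))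
    conv_lhs => rw [ih]
    rw [mpMul_assoc]
    rfl

def wt {n : ℕ} (B : Fin n → Fin n → MP) (p : ℕ → Fin n) (m : ℕ) : MP :=
  ∑ r ∈ Finset.range m, B (p r) (p (r+1))

lemma wt_le_pow {n : ℕ} (B : Fin n → Fin n → MP) (p : ℕ → Fin n) (m : ℕ) :
    wt B p m ≤ mpPow B m (p 0) (p m) := by
  induction m with
  | zero => simp [wt, mpPow, mpId]
  | succ m ih =>
    rw [wt, Finset.sum_range_succ]
    calc (∑ r ∈ Finset.range m, B (p r) (p (r+1))) + B (p m) (p (m+1))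
        ≤ mpPow B m (p 0) (p m) + B (p m) (p (m+1)) := add_le_add_left ih _
      _ ≤ _ := Finset.le_sup (f := fun k => mpPow B m (p 0) k + B k (p (m+1)))
          (Finset.mem_univ (p m))

lemma pow_le_of_wt {n : ℕ} (B : Fin n → Fin n → MP) :
    ∀ (m : ℕ) (i j : Fin n) (d c : MP),
      (∀ p : ℕ → Fin n, p 0 = i → p m = j → wt B p m + d ≤ c) →
      mpPow B m i j + d ≤ c := by
  intro m
  induction m with
  | zero =>
    intro i j d c H
    by_cases hij : i = j
    · subst hij
      have := H (fun _ => i) rfl rfl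
      simpa [wt, mpPow, mpId] using this
    · simp [mpPow, mpId, hij, WithBot.bot_add]
  | succ m ih =>
    intro i j d c H
    show mpMul (mpPow B m) B i j + d ≤ c
    rw [mpMul, finsetSup_add]
    apply Finset.sup_le
    intro k _
    rw [add_assoc]
    apply ih i k (B k j + d) c
    intro p hp0 hpm
    set p' : ℕ → Fin n := fun r => if r ≤ m then p r else j with hp'
    have h1 : wt B p' (m+1) = wt B p m + B k j := by
      rw [wt, Finset.sum_range_succ]
      congr 1
      · apply Finset.sum_congr rfl
        intro r hr
        rw [Finset.mem_range] at hr
        simp [hp', Nat.le_of_lt hr, Nat.succ_le_of_lt hr]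
      · have e1 : p' m = k := by simp [hp', hpm]
        have e2 : p' (m+1) = j := by simp [hp']
        rw [e1, e2]
    have := H p' (by simp [hp', hp0]) (by simp [hp'])
    rw [h1, add_assoc] at this
    exact this

lemma mpStar_apply {n : ℕ} (B : Fin n → Fin n → MP) (i j : Fin n) :
    mpStar B i j = (Finset.range n).sup fun k => mpPow B k i j := by
  rw [mpStar, Finset.sup_apply, Finset.sup_apply]

lemma pow_le_star {n : ℕ} (B : Fin n → Fin n → MP) (k : ℕ) (hk : k < n) (i j : Fin n) :
    mpPow B k i j ≤ mpStar B i j := by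
  rw [mpStar_apply]
  exact Finset.le_sup (f := fun k => mpPow B k i j) (Finset.mem_range.2 hk)

lemma pow_n_le_star {n : ℕ} (B : Fin n → Fin n → MP)
    (htr : ∀ l, 1 ≤ l → l ≤ n → mptr (mpPow B l) ≤ 0) (i j : Fin n) :
    mpPow B n i j ≤ mpStar B i j := by
  have key : ∀ p : ℕ → Fin n, p 0 = i → p n = j → wt B p n + 0 ≤ mpStar B i j := by
    intro p hp0 hpn
    rw [add_zero]
    obtain ⟨a, b, hab, heq⟩ := Fintype.exists_ne_map_eq_of_card_lt
      (fun r : Fin (n+1) => p r) (by simp)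
    obtain ⟨s, t, hst, htn, hps⟩ : ∃ s t : ℕ, s < t ∧ t ≤ n ∧ p s = p t := by
      rcases lt_or_gt_of_ne hab with hlt | hgt
      · exact ⟨a, b, hlt, Nat.lt_succ_iff.mp b.isLt, heq⟩
      · exact ⟨b, a, hgt, Nat.lt_succ_iff.mp a.isLt, heq.symm⟩
    set l := t - s with hl
    have hl1 : 1 ≤ l := by omega
    have hsl : s + l = t := by omega
    have hsnl : s ≤ n - l := by omega
    have hnl : n - l + l = n := by omega
    set w : ℕ → MP := fun r => B (p r) (p (r+1)) with hw
    set q : ℕ → Fin n := fun r => if r < s then p r else p (r + l) with hq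
    have hcyc : (∑ r ∈ Finset.Ico s t, w r) ≤ 0 := by
      have e1 : (∑ r ∈ Finset.Ico s t, w r) = wt B (fun r => p (s + r)) l := by
        rw [Finset.sum_Ico_eq_sum_range, wt]
        apply Finset.sum_congr (by rw [hl])
        intro r _
        simp only [hw]
        congr 2 <;> omega
      rw [e1]
      calc wt B (fun r => p (s + r)) l ≤ mpPow B l (p (s + 0)) (p (s + l)) :=
            wt_le_pow B _ l
        _ ≤ mptr (mpPow B l) := by
            rw [add_zero, hsl, ← hps]
            exact Finset.le_sup (f := fun i => mpPow B l i i) (Finset.mem_univ (p s))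
        _ ≤ 0 := htr l hl1 (by omega)
    have hqwt : wt B q (n - l) = (∑ r ∈ Finset.Ico 0 s, w r) + ∑ r ∈ Finset.Ico t n, w r := by
      rw [wt, Finset.range_eq_Ico, ← Finset.sum_Ico_consecutive _ (Nat.zero_le s) hsnl]
      congr 1
      · apply Finset.sum_congr rfl
        intro r hr
        rw [Finset.mem_Ico] at hr
        have hr2 : r < s := hr.2
        have e1 : q r = p r := by simp [hq, hr2]
        have e2 : q (r+1) = p (r+1) := by
          by_cases h : r + 1 < s
          · simp [hq, h]
          · have : r + 1 = s := by omega
            simp [hq, this, hsl, ← hps]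
        rw [e1, e2]
      · rw [Finset.sum_Ico_eq_sum_range, Finset.sum_Ico_eq_sum_range]
        apply Finset.sum_congr (by rw [show n - l - s = n - t from by omega])
        intro r _
        have e1 : q (s + r) = p (s + r + l) := by simp [hq]
        have e2 : q (s + r + 1) = p (s + r + 1 + l) := by
          have : ¬ (s + r + 1 < s) := by omega
          simp [hq, this]
        rw [e1, e2]
        simp only [hw]
        congr 2 <;> omega
    have hsplit : wt B p n = ((∑ r ∈ Finset.Ico 0 s, w r) + ∑ r ∈ Finset.Ico t n, w r)
        + ∑ r ∈ Finset.Ico s t, w r := by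
      rw [wt, Finset.range_eq_Ico,
        ← Finset.sum_Ico_consecutive (fun r => w r) (Nat.zero_le t) htn,
        ← Finset.sum_Ico_consecutive (fun r => w r) (Nat.zero_le s) (le_of_lt hst)]
      exact add_right_comm _ _ _
    have hq0 : q 0 = i := by
      by_cases h : 0 < s
      · simp [hq, h, hp0]
      · have hs0 : s = 0 := by omega
        have : q 0 = p l := by simp [hq, hs0]
        have hlt : l = t := by omega
        rw [this, hlt, ← hps, hs0, hp0]
    have hqn : q (n - l) = j := by
      have : ¬ (n - l < s) := by omega
      simp [hq, this, hnl, hpn]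
    calc wt B p n = ((∑ r ∈ Finset.Ico 0 s, w r) + ∑ r ∈ Finset.Ico t n, w r)
          + ∑ r ∈ Finset.Ico s t, w r := hsplit
      _ ≤ ((∑ r ∈ Finset.Ico 0 s, w r) + ∑ r ∈ Finset.Ico t n, w r) + 0 :=
          add_le_add_right hcyc _
      _ = wt B q (n - l) := by rw [add_zero, hqwt]
      _ ≤ mpPow B (n - l) (q 0) (q (n - l)) := wt_le_pow B q (n - l)
      _ = mpPow B (n - l) i j := by rw [hq0, hqn]
      _ ≤ mpStar B i j := pow_le_star B (n - l) (by omega) i j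
  have := pow_le_of_wt B n i j 0 (mpStar B i j) key
  simpa using this

lemma const_add_pow {n : ℕ} (A : Fin n → Fin n → MP) (c : ℝ) (k : ℕ) (i j : Fin n) :
    mpPow (fun i j => (c : MP) + A i j) k i j = ((k * c : ℝ) : MP) + mpPow A k i j := by
  induction k generalizing i j with
  | zero =>
    show mpId n i j = _
    by_cases hij : i = j
    · subst hij; simp [mpPow, mpId]
    · simp [mpPow, mpId, hij, WithBot.add_bot]
  | succ k ih =>
    rw [show ((((k+1):ℕ):ℝ) * c) = ((k:ℝ)+1)*c from by push_cast; ring]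
    show mpMul _ _ i j = ((((k:ℝ)+1) * c : ℝ) : MP) + mpMul (mpPow A k) A i j
    rw [mpMul, mpMul, add_finsetSup]
    apply Finset.sup_congr rfl
    intro l _
    rw [ih]
    have hc : (((k:ℝ)+1) * c : ℝ) = ((k:ℝ) * c) + c := by ring
    rw [hc, WithBot.coe_add]
    abel

lemma pow_bot {n : ℕ} (A : Fin n → Fin n → MP) (hA : ∀ i j, A i j = ⊥)
    (k : ℕ) (hk : 1 ≤ k) (i j : Fin n) : mpPow A k i j = ⊥ := by
  cases k with
  | zero => omega
  | succ m =>
    show mpMul (mpPow A m) A i j = ⊥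
    rw [mpMul]
    rw [Finset.sup_eq_bot_iff]
    intro l _
    rw [hA l j, WithBot.add_bot]

end MaxPlusHelpers

/-- Constrained minimization of x⁻ ⊗ A ⊗ x: for A with finite spectral radius
λ > -∞, g ≤ h with h regular, the minimum of x⁻ ⊗ A ⊗ x over regular x with
g ≤ x ≤ h equals θ = λ ⊕ max_{k=1..n-1} (h⁻ ⊗ Aᵏ ⊗ g)^{1/k}, and the regular
minimizers are exactly the vectors x = (θ⁻¹⊗A)* ⊗ u with
g ≤ u ≤ (h⁻ ⊗ (θ⁻¹⊗A)*)⁻. -/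
theorem maxplus_min_xAx_box {n : ℕ} (A : Fin n → Fin n → MP)
    (hlam : specRad A ≠ ⊥) (g : Fin n → MP) (h : Fin n → ℝ)
    (hgh : ∀ i, g i ≤ ((h i : ℝ) : MP)) :
    (∀ x : Fin n → ℝ, (∀ i, g i ≤ ((x i : ℝ) : MP)) → (∀ i, x i ≤ h i) →
      theta A g h ≤ obj A fun i => ((x i : ℝ) : MP)) ∧
    (∀ x : Fin n → ℝ,
      ((∀ i, g i ≤ ((x i : ℝ) : MP)) ∧ (∀ i, x i ≤ h i) ∧
        (obj A fun i => ((x i : ℝ) : MP)) = theta A g h) ↔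
      ∃ u : Fin n → ℝ,
        (∀ i, g i ≤ ((u i : ℝ) : MP)) ∧
        (∀ j, ((u j : ℝ) : MP) ≤ mneg (Finset.univ.sup fun i =>
            ((-h i : ℝ) : MP) + mpStar (matB A g h) i j)) ∧
        (∀ i, ((x i : ℝ) : MP) =
          mpMulVec (mpStar (matB A g h)) (fun j => ((u j : ℝ) : MP)) i)) := by
  classical
  have hn : 0 < n := by
    rcases Nat.eq_zero_or_pos n with h0 | hp
    · exfalso; apply hlam
      subst h0
      rw [specRad]
      simp
    · exact hp
  have hth : specRad A ≤ theta A g h := le_sup_left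
  obtain ⟨t, ht⟩ : ∃ t : ℝ, theta A g h = ((t:ℝ):MP) := by
    rcases mp_cases (theta A g h) with hb | hc
    · exact absurd (le_bot_iff.mp (hb ▸ hth)) hlam
    · exact hc
  set Bm := matB A g h with hBmdef
  have hBm : ∀ i j, Bm i j = ((-t : ℝ) : MP) + A i j := by
    intro i j
    show mneg (theta A g h) + A i j = _
    rw [ht, mneg_coe]
  have powBm : ∀ k (i j : Fin n),
      mpPow Bm k i j = (((k:ℝ) * (-t) : ℝ) : MP) + mpPow A k i j := by
    intro k i j
    have hBf : Bm = fun i j => (((-t:ℝ)):MP) + A i j :=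
      funext fun i => funext fun j => hBm i j
    rw [hBf, const_add_pow]
  have trA : ∀ k, 1 ≤ k → k ≤ n → mptr (mpPow A k) ≤ (((k:ℝ) * t : ℝ) : MP) := by
    intro k h1 h2
    have hs : WithBot.map (fun r => r / (k:ℝ)) (mptr (mpPow A k)) ≤ ((t:ℝ):MP) := by
      refine le_trans ?_ (le_trans hth ht.le)
      exact Finset.le_sup (f := fun l : ℕ => WithBot.map (fun r => r / (l : ℝ))
        (mptr (mpPow A l))) (Finset.mem_Icc.2 ⟨h1, h2⟩)
    rcases mp_cases (mptr (mpPow A k)) with hm | ⟨r, hm⟩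
    · rw [hm]; exact bot_le
    · rw [hm] at hs ⊢
      rw [WithBot.map_coe, WithBot.coe_le_coe] at hs
      rw [WithBot.coe_le_coe]
      have hk0 : (0:ℝ) < (k:ℝ) := by exact_mod_cast h1
      have := (div_le_iff₀ hk0).mp hs
      linarith
  have trB : ∀ k, 1 ≤ k → k ≤ n → mptr (mpPow Bm k) ≤ 0 := by
    intro k h1 h2
    rw [mptr]
    apply Finset.sup_le
    intro i _
    rw [powBm]
    have hle : mpPow A k i i ≤ (((k:ℝ)*t:ℝ):MP) :=
      le_trans (Finset.le_sup (f := fun i => mpPow A k i i) (Finset.mem_univ i))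
        (trA k h1 h2)
    calc (((k:ℝ) * (-t):ℝ):MP) + mpPow A k i i
        ≤ (((k:ℝ)*(-t):ℝ):MP) + (((k:ℝ)*t:ℝ):MP) := add_le_add_right hle _
      _ = ((((k:ℝ)*(-t) + (k:ℝ)*t):ℝ):MP) := (WithBot.coe_add _ _).symm
      _ = ((0:ℝ):MP) := by rw [show ((k:ℝ)*(-t) + (k:ℝ)*t) = (0:ℝ) from by ring]
      _ = 0 := WithBot.coe_zero
  have powStar : ∀ m, m ≤ n → ∀ i j : Fin n, mpPow Bm m i j ≤ mpStar Bm i j := by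
    intro m hm i j
    rcases eq_or_lt_of_le hm with he | hlt
    · subst he; exact pow_n_le_star Bm trB i j
    · exact pow_le_star Bm m hlt i j
  have starDiag : ∀ i, (0:MP) ≤ mpStar Bm i i := by
    intro i
    have h0 := pow_le_star Bm 0 hn i i
    simpa [mpPow, mpId] using h0
  have objLe : ∀ (x : Fin n → ℝ) (μ : ℝ),
      obj A (fun i => ((x i:ℝ):MP)) ≤ ((μ:ℝ):MP) ↔
      ∀ i j, A i j + ((x j:ℝ):MP) ≤ ((μ + x i:ℝ):MP) := by
    intro x μ
    rw [obj, Finset.sup_le_iff]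
    constructor
    · intro H i j
      have h1 := H i (Finset.mem_univ i)
      rw [mneg_coe, coe_add_le_coe_iff] at h1
      have h2 : A i j + ((x j:ℝ):MP) ≤ mpMulVec A (fun i => ((x i:ℝ):MP)) i :=
        Finset.le_sup (f := fun j => A i j + ((x j:ℝ):MP)) (Finset.mem_univ j)
      refine le_trans h2 (le_trans h1 (le_of_eq ?_))
      rw [sub_neg_eq_add]
    · intro H i _
      rw [mneg_coe, coe_add_le_coe_iff]
      apply Finset.sup_le
      intro j _
      refine le_trans (H i j) (le_of_eq ?_)
      rw [sub_neg_eq_add]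
  have powBound : ∀ (x : Fin n → ℝ) (μ : ℝ),
      (∀ i j, A i j + ((x j:ℝ):MP) ≤ ((μ + x i:ℝ):MP)) →
      ∀ k (i j : Fin n), mpPow A k i j + ((x j:ℝ):MP) ≤ (((k:ℝ)*μ + x i:ℝ):MP) := by
    intro x μ H k
    induction k with
    | zero =>
      intro i j
      by_cases hij : i = j
      · subst hij
        have hid : mpId n i i = 0 := by simp [mpId]
        show mpId n i i + _ ≤ _
        rw [hid, zero_add, WithBot.coe_le_coe]
        push_cast
        norm_num
      · show mpId n i j + _ ≤ _
        rw [mpId]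
        simp [hij, WithBot.bot_add]
    | succ k ih =>
      intro i j
      show mpMul (mpPow A k) A i j + _ ≤ _
      rw [mpMul, finsetSup_add]
      apply Finset.sup_le
      intro l _
      rw [add_assoc]
      calc mpPow A k i l + (A l j + ((x j:ℝ):MP))
          ≤ mpPow A k i l + ((μ + x l:ℝ):MP) := add_le_add_right (H l j) _
        _ = (mpPow A k i l + ((x l:ℝ):MP)) + ((μ:ℝ):MP) := by
            rw [add_assoc, ← WithBot.coe_add, add_comm μ (x l)]
        _ ≤ (((k:ℝ)*μ + x i:ℝ):MP) + ((μ:ℝ):MP) := add_le_add_left (ih i l) _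
        _ = (((((k+1):ℕ):ℝ)*μ + x i:ℝ):MP) := by
            rw [← WithBot.coe_add]
            exact congrArg (fun r : ℝ => ((r:ℝ):MP)) (by push_cast; ring)
  have claim1 : ∀ x : Fin n → ℝ, (∀ i, g i ≤ ((x i:ℝ):MP)) → (∀ i, x i ≤ h i) →
      theta A g h ≤ obj A fun i => ((x i:ℝ):MP) := by
    intro x hg hx
    obtain ⟨m, hm⟩ : ∃ m : ℝ, obj A (fun i => ((x i:ℝ):MP)) = ((m:ℝ):MP) := by
      rcases mp_cases (obj A fun i => ((x i:ℝ):MP)) with hb | hc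
      · exfalso
        obtain ⟨i0, j0, a0, ha0⟩ : ∃ (i0 j0 : Fin n) (a0 : ℝ), A i0 j0 = ((a0:ℝ):MP) := by
          by_contra hA
          push_neg at hA
          have hA' : ∀ i j, A i j = ⊥ := by
            intro i j
            rcases mp_cases (A i j) with hb' | ⟨r, hr⟩
            · exact hb'
            · exact absurd hr (hA i j r)
          apply hlam
          rw [specRad, Finset.sup_eq_bot_iff]
          intro k hk
          rw [Finset.mem_Icc] at hk
          have hbt : mptr (mpPow A k) = ⊥ := by
            rw [mptr, Finset.sup_eq_bot_iff]
            intro i _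
            exact pow_bot A hA' k hk.1 i i
          rw [hbt]
          rfl
        have hterm : ((-(x i0) + (a0 + x j0):ℝ):MP) ≤ obj A (fun i => ((x i:ℝ):MP)) := by
          rw [obj]
          refine le_trans ?_ (Finset.le_sup (f := fun i => mneg ((x i:ℝ):MP) +
            mpMulVec A (fun i => ((x i:ℝ):MP)) i) (Finset.mem_univ i0))
          rw [mneg_coe]
          have h2 : ((a0 + x j0 : ℝ):MP) ≤ mpMulVec A (fun i => ((x i:ℝ):MP)) i0 := by
            rw [WithBot.coe_add, ← ha0]
            exact Finset.le_sup (f := fun j => A i0 j + ((x j:ℝ):MP)) (Finset.mem_univ j0)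
          calc ((-(x i0) + (a0 + x j0):ℝ):MP)
              = ((-(x i0):ℝ):MP) + ((a0 + x j0:ℝ):MP) := WithBot.coe_add _ _
            _ ≤ _ := add_le_add_right h2 _
        rw [hb] at hterm
        exact absurd (le_bot_iff.mp hterm) WithBot.coe_ne_bot
      · exact hc
    rw [hm]
    have hO : ∀ i j, A i j + ((x j:ℝ):MP) ≤ ((m + x i:ℝ):MP) := (objLe x m).mp (le_of_eq hm)
    have hP := powBound x m hO
    rw [theta, sup_le_iff]
    constructor
    · rw [specRad]
      apply Finset.sup_le
      intro k hk
      rw [Finset.mem_Icc] at hk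
      rcases mp_cases (mptr (mpPow A k)) with hbt | ⟨r, hr⟩
      · rw [hbt]; exact bot_le
      · rw [hr, WithBot.map_coe, WithBot.coe_le_coe]
        have hk0 : (0:ℝ) < (k:ℝ) := by exact_mod_cast hk.1
        rw [div_le_iff₀ hk0]
        have htr : mptr (mpPow A k) ≤ (((k:ℝ)*m:ℝ):MP) := by
          rw [mptr]
          apply Finset.sup_le
          intro i _
          have hki := hP k i i
          rw [add_coe_le_coe_iff] at hki
          refine le_trans hki (le_of_eq ?_)
          exact congrArg (fun r : ℝ => ((r:ℝ):MP)) (by ring)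
        rw [hr, WithBot.coe_le_coe] at htr
        linarith
    · apply Finset.sup_le
      intro k hk
      rw [Finset.mem_Icc] at hk
      rcases mp_cases (Finset.univ.sup fun i => mpMulVec (mpPow A k) g i + ((-h i:ℝ):MP))
        with hbt | ⟨r, hr⟩
      · rw [hbt]; exact bot_le
      · rw [hr, WithBot.map_coe, WithBot.coe_le_coe]
        have hk0 : (0:ℝ) < (k:ℝ) := by exact_mod_cast hk.1
        rw [div_le_iff₀ hk0]
        have hSb : (Finset.univ.sup fun i => mpMulVec (mpPow A k) g i + ((-h i:ℝ):MP))
            ≤ (((k:ℝ)*m:ℝ):MP) := by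
          apply Finset.sup_le
          intro i _
          rw [add_coe_le_coe_iff, mpMulVec]
          apply Finset.sup_le
          intro j _
          calc mpPow A k i j + g j ≤ mpPow A k i j + ((x j:ℝ):MP) :=
                add_le_add_right (hg j) _
            _ ≤ (((k:ℝ)*m + x i:ℝ):MP) := hP k i j
            _ ≤ (((k:ℝ)*m - -h i:ℝ):MP) := by
                rw [WithBot.coe_le_coe]
                have := hx i
                linarith
        rw [hr, WithBot.coe_le_coe] at hSb
        linarith
  have feasIff : ∀ x : Fin n → ℝ,
      ((obj A fun i => ((x i:ℝ):MP)) ≤ theta A g h ↔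
        ∀ i j, Bm i j + ((x j:ℝ):MP) ≤ ((x i:ℝ):MP)) := by
    intro x
    rw [ht, objLe x t]
    constructor
    · intro H i j
      rw [hBm i j]
      calc ((-t:ℝ):MP) + A i j + ((x j:ℝ):MP)
          = ((-t:ℝ):MP) + (A i j + ((x j:ℝ):MP)) := add_assoc _ _ _
        _ ≤ ((-t:ℝ):MP) + ((t + x i:ℝ):MP) := add_le_add_right (H i j) _
        _ = ((x i:ℝ):MP) := by
            rw [← WithBot.coe_add]
            exact congrArg (fun r : ℝ => ((r:ℝ):MP)) (by ring)
    · intro H i j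
      have h1 := H i j
      rw [hBm i j] at h1
      rcases mp_cases (A i j) with hb | ⟨a, ha⟩
      · rw [hb]
        simp [WithBot.add_bot, WithBot.bot_add]
      · rw [ha] at h1 ⊢
        rw [← WithBot.coe_add, ← WithBot.coe_add, WithBot.coe_le_coe] at h1
        rw [← WithBot.coe_add, WithBot.coe_le_coe]
        linarith
  have mulStarLe : ∀ i j k : Fin n, Bm i j + mpStar Bm j k ≤ mpStar Bm i k := by
    intro i j k
    rw [mpStar_apply Bm j k, add_finsetSup]
    apply Finset.sup_le
    intro l hl
    rw [Finset.mem_range] at hl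
    calc Bm i j + mpPow Bm l j k
        ≤ Finset.univ.sup (fun j' => Bm i j' + mpPow Bm l j' k) :=
          Finset.le_sup (f := fun j' => Bm i j' + mpPow Bm l j' k) (Finset.mem_univ j)
      _ = mpMul Bm (mpPow Bm l) i k := rfl
      _ = mpPow Bm (l+1) i k := by rw [← mpPow_succ']
      _ ≤ mpStar Bm i k := powStar (l+1) (by omega) i k
  constructor
  · exact claim1
  · intro x
    constructor
    · rintro ⟨hg1, hh1, hobj⟩
      have hBx : ∀ i j, Bm i j + ((x j:ℝ):MP) ≤ ((x i:ℝ):MP) :=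
        (feasIff x).mp (le_of_eq hobj)
      have hpowx : ∀ k (i j : Fin n), mpPow Bm k i j + ((x j:ℝ):MP) ≤ ((x i:ℝ):MP) := by
        intro k
        induction k with
        | zero =>
          intro i j
          by_cases hij : i = j
          · subst hij
            show mpId n i i + _ ≤ _
            simp [mpId]
          · show mpId n i j + _ ≤ _
            simp [mpId, hij, WithBot.bot_add]
        | succ k ih =>
          intro i j
          show mpMul (mpPow Bm k) Bm i j + _ ≤ _
          rw [mpMul, finsetSup_add]
          apply Finset.sup_le
          intro l _
          rw [add_assoc]
          calc mpPow Bm k i l + (Bm l j + ((x j:ℝ):MP))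
              ≤ mpPow Bm k i l + ((x l:ℝ):MP) := add_le_add_right (hBx l j) _
            _ ≤ _ := ih i l
      have hstarx : ∀ i j, mpStar Bm i j + ((x j:ℝ):MP) ≤ ((x i:ℝ):MP) := by
        intro i j
        rw [mpStar_apply, finsetSup_add]
        apply Finset.sup_le
        intro k _
        exact hpowx k i j
      refine ⟨x, hg1, ?_, ?_⟩
      · intro j
        have hSle : (Finset.univ.sup fun i => ((-h i:ℝ):MP) + mpStar Bm i j)
            ≤ ((-x j:ℝ):MP) := by
          apply Finset.sup_le
          intro i _
          rcases mp_cases (mpStar Bm i j) with hb | ⟨c, hc⟩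
          · rw [hb, WithBot.add_bot]; exact bot_le
          · have hsx := hstarx i j
            rw [hc] at hsx ⊢
            rw [← WithBot.coe_add, WithBot.coe_le_coe] at hsx
            rw [← WithBot.coe_add, WithBot.coe_le_coe]
            have := hh1 i
            linarith
        rcases mp_cases (Finset.univ.sup fun i => ((-h i:ℝ):MP) + mpStar Bm i j)
          with hb | ⟨s, hs⟩
        · exfalso
          have hdiag : ((-h j:ℝ):MP) ≤
              Finset.univ.sup fun i => ((-h i:ℝ):MP) + mpStar Bm i j := by
            refine le_trans ?_ (Finset.le_sup (f := fun i => ((-h i:ℝ):MP) + mpStar Bm i j)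
              (Finset.mem_univ j))
            calc ((-h j:ℝ):MP) = ((-h j:ℝ):MP) + 0 := (add_zero _).symm
              _ ≤ _ := add_le_add_right (starDiag j) _
          rw [hb] at hdiag
          exact absurd (le_bot_iff.mp hdiag) WithBot.coe_ne_bot
        · rw [hs, mneg_coe]
          rw [hs, WithBot.coe_le_coe] at hSle
          rw [WithBot.coe_le_coe]
          linarith
      · intro i
        apply le_antisymm
        · rw [mpMulVec]
          refine le_trans ?_ (Finset.le_sup (f := fun j => mpStar Bm i j + ((x j:ℝ):MP))
            (Finset.mem_univ i))
          calc ((x i:ℝ):MP) = 0 + ((x i:ℝ):MP) := (zero_add _).symm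
            _ ≤ _ := add_le_add_left (starDiag i) _
        · rw [mpMulVec]
          apply Finset.sup_le
          intro j _
          exact hstarx i j
    · rintro ⟨u, hu1, hu2, hux⟩
      have hstar_u_h : ∀ i j, mpStar Bm i j + ((u j:ℝ):MP) ≤ ((h i:ℝ):MP) := by
        intro i j
        rcases mp_cases (Finset.univ.sup fun i => ((-h i:ℝ):MP) + mpStar Bm i j)
          with hb | ⟨s, hs⟩
        · exfalso
          have h1 := hu2 j
          rw [hb] at h1
          simp [mneg] at h1
        · have h1 := hu2 j
          rw [hs, mneg_coe, WithBot.coe_le_coe] at h1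
          have h2 : ((-h i:ℝ):MP) + mpStar Bm i j ≤ ((s:ℝ):MP) :=
            hs ▸ Finset.le_sup (f := fun i => ((-h i:ℝ):MP) + mpStar Bm i j)
              (Finset.mem_univ i)
          rcases mp_cases (mpStar Bm i j) with hc | ⟨c, hc⟩
          · rw [hc, WithBot.bot_add]; exact bot_le
          · rw [hc] at h2 ⊢
            rw [← WithBot.coe_add, WithBot.coe_le_coe] at h2
            rw [← WithBot.coe_add, WithBot.coe_le_coe]
            linarith
      have hxg : ∀ i, g i ≤ ((x i:ℝ):MP) := by
        intro i
        rw [hux i, mpMulVec]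
        refine le_trans (hu1 i) ?_
        refine le_trans ?_ (Finset.le_sup (f := fun j => mpStar Bm i j + ((u j:ℝ):MP))
          (Finset.mem_univ i))
        calc ((u i:ℝ):MP) = 0 + ((u i:ℝ):MP) := (zero_add _).symm
          _ ≤ _ := add_le_add_left (starDiag i) _
      have hxh : ∀ i, x i ≤ h i := by
        intro i
        have hxi : ((x i:ℝ):MP) ≤ ((h i:ℝ):MP) := by
          rw [hux i, mpMulVec]
          apply Finset.sup_le
          intro j _
          exact hstar_u_h i j
        exact WithBot.coe_le_coe.mp hxi
      refine ⟨hxg, hxh, le_antisymm ?_ (claim1 x hxg hxh)⟩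
      rw [feasIff x]
      intro i j
      rw [hux j, hux i, mpMulVec, mpMulVec, add_finsetSup]
      apply Finset.sup_le
      intro k _
      calc Bm i j + (mpStar Bm j k + ((u k:ℝ):MP))
          = (Bm i j + mpStar Bm j k) + ((u k:ℝ):MP) := (add_assoc _ _ _).symm
        _ ≤ mpStar Bm i k + ((u k:ℝ):MP) := add_le_add_left (mulStarLe i j k) _
        _ ≤ _ := Finset.le_sup (f := fun j => mpStar Bm i j + ((u j:ℝ):MP))
            (Finset.mem_univ k)
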